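/- Let Λ > 1, 0 < α < 1, ε ∈ (0, e^{-1}), and suppose |ln ε|^{(1−α)/4} > 2^{1/4} Λ^{1/2} (2(Δ+2)π)^{1/4} for some Δ ≥ 0. Set s = (2(Δ+2)π)^{-1/4} Λ^{1/2} |ln ε|^{(1−α)/4}. Then s > 2^{1/4} Λ and, for μ(s) = π^{-1}((s/Λ)⁴ − 1)^{-1/2}, 2μ(s)|ln ε| − 2(Δ+2)s² ≥ 2 (2(Δ+2)/π)^{1/2} Λ |ln ε|^{(1+α)/2} (1 − (1/2)|ln ε|^{-α}) > 0. -/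

import Mathlib

/-!
For s > Λ one has μ(s) ≥ π⁻¹ (Λ/s)², because ((s/Λ)⁴ - 1)^(-1/2) ≥ ((s/Λ)⁴)^(-1/2). The cutoff is
chosen so that s² = Λ |ln ε|^((1-α)/2) / √(2(Δ+2)π); with this value the two terms
2π⁻¹(Λ/s)²|ln ε| and 2(Δ+2)s² are exactly 2√(2(Δ+2)/π) Λ |ln ε|^((1+α)/2) and
√(2(Δ+2)/π) Λ |ln ε|^((1-α)/2), and their difference is the claimed rate. It is positive since
|ln ε| > 1 makes |ln ε|^(-α) < 1.
-/

open Real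

lemma one_lt_abs_log_of_lt_exp_neg_one {ε : ℝ} (hε0 : 0 < ε) (hε1 : ε < exp (-1)) :
    1 < |log ε| := by
  have : log ε < -1 := (log_lt_iff_lt_exp hε0).mpr hε1
  rw [abs_of_neg (by linarith)]
  linarith

lemma rpow_neg_half_pow_four (q : ℝ) : (q ^ 4) ^ (-(1:ℝ)/2) = (q ^ 2)⁻¹ := by
  rw [neg_div, rpow_neg (by positivity), ← sqrt_eq_rpow,
    show q ^ 4 = (q ^ 2) ^ 2 by ring, sqrt_sq (by positivity)]

lemma inv_sq_le_rpow_pow_four_sub_one {q : ℝ} (hq : 1 < q) :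
    (q ^ 2)⁻¹ ≤ (q ^ 4 - 1) ^ (-(1:ℝ)/2) := by
  have h4 : 1 < q ^ 4 := one_lt_pow₀ hq (by norm_num)
  rw [← rpow_neg_half_pow_four q]
  exact rpow_le_rpow_of_nonpos (by linarith) (by linarith) (by norm_num)

lemma sq_rpow_neg_quarter_mul {a b c : ℝ} (ha : 0 ≤ a) (hb : 0 ≤ b) (hc : 0 ≤ c) (r : ℝ) :
    (a ^ (-(1:ℝ)/4) * b ^ ((1:ℝ)/2) * c ^ (r/4)) ^ 2 = b * c ^ (r/2) / √a := by
  simp only [mul_pow, ← rpow_mul_natCast ha, ← rpow_mul_natCast hb, ← rpow_mul_natCast hc]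
  rw [sqrt_eq_rpow, show -(1:ℝ)/4 * (2:ℕ) = -(1/2) by norm_num, rpow_neg ha,
    show (1:ℝ)/2 * (2:ℕ) = 1 by norm_num, rpow_one, show r/4 * (2:ℕ) = r/2 by push_cast; ring]
  ring

lemma lt_rpow_neg_quarter_mul_of_lt {a b c x : ℝ} (ha : 0 < a) (hb : 0 < b)
    (h : x * b ^ ((1:ℝ)/2) * a ^ ((1:ℝ)/4) < c) :
    x * b < a ^ (-(1:ℝ)/4) * b ^ ((1:ℝ)/2) * c := by
  have hab : 0 < a ^ (-(1:ℝ)/4) * b ^ ((1:ℝ)/2) := by positivity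
  calc x * b = a ^ (-(1:ℝ)/4) * b ^ ((1:ℝ)/2) * (x * b ^ ((1:ℝ)/2) * a ^ ((1:ℝ)/4)) := by
        rw [neg_div, rpow_neg ha.le, ← sqrt_eq_rpow]
        field_simp
        rw [sq_sqrt hb.le]
    _ < a ^ (-(1:ℝ)/4) * b ^ ((1:ℝ)/2) * c := mul_lt_mul_of_pos_left h hab

lemma mul_inv_div_sub_mul_eq_of_eq {k p Λ L α c : ℝ} (hk : 0 < k) (hp : 0 < p) (hΛ : Λ ≠ 0)
    (hL : 0 < L) (hc : c = Λ * L ^ ((1 - α)/2) / √(k * p)) :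
    2 * p⁻¹ * (Λ ^ 2 / c) * L - k * c =
      2 * √(k / p) * Λ * L ^ ((1 + α)/2) * (1 - 1/2 * L ^ (-α)) := by
  subst hc
  set r := L ^ ((1 - α)/2) with hr
  have hr0 : 0 < r := by positivity
  have hplus : L ^ ((1 + α)/2) = L / r := by
    rw [eq_div_iff hr0.ne', hr, ← rpow_add hL]; ring_nf; exact rpow_one L
  have hminus : L ^ (-α) = r ^ 2 / L := by
    rw [eq_div_iff hL.ne', hr, ← rpow_mul_natCast hL.le, ← rpow_add_one hL.ne']
    congr 1
    push_cast
    ring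
  rw [hplus, hminus, sqrt_div hk.le, sqrt_mul hk.le]
  have : 0 < √k := sqrt_pos.mpr hk
  have : 0 < √p := sqrt_pos.mpr hp
  field_simp
  rw [sq_sqrt hk.le, sq_sqrt hp.le]
  ring

theorem stmt_18_general (Λ α ε Δ : ℝ) (hΛ : 1 < Λ) (hα0 : 0 < α)
    (hε0 : 0 < ε) (hε1 : ε < Real.exp (-1)) (hΔ : 0 ≤ Δ)
    (hcase : |Real.log ε| ^ ((1 - α)/4) >
      (2 : ℝ) ^ ((1:ℝ)/4) * Λ ^ ((1:ℝ)/2) * (2 * (Δ + 2) * Real.pi) ^ ((1:ℝ)/4)) :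
    (2 * (Δ + 2) * Real.pi) ^ (-(1:ℝ)/4) * Λ ^ ((1:ℝ)/2) * |Real.log ε| ^ ((1 - α)/4)
        > (2 : ℝ) ^ ((1:ℝ)/4) * Λ ∧
    (let s := (2 * (Δ + 2) * Real.pi) ^ (-(1:ℝ)/4) * Λ ^ ((1:ℝ)/2) *
        |Real.log ε| ^ ((1 - α)/4);
      let μ := Real.pi⁻¹ * ((s / Λ) ^ (4:ℕ) - 1) ^ (-(1:ℝ)/2);
      2 * μ * |Real.log ε| - 2 * (Δ + 2) * s ^ 2 ≥
        2 * (2 * (Δ + 2) / Real.pi) ^ ((1:ℝ)/2) * Λ * |Real.log ε| ^ ((1 + α)/2) *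
          (1 - (1/2) * |Real.log ε| ^ (-α)) ∧
      0 < 2 * (2 * (Δ + 2) / Real.pi) ^ ((1:ℝ)/2) * Λ * |Real.log ε| ^ ((1 + α)/2) *
          (1 - (1/2) * |Real.log ε| ^ (-α))) := by
  set L := |log ε|
  have hL : 1 < L := one_lt_abs_log_of_lt_exp_neg_one hε0 hε1
  have hk : 0 < 2 * (Δ + 2) := by linarith
  have hs : (2 * (Δ + 2) * π) ^ (-(1:ℝ)/4) * Λ ^ ((1:ℝ)/2) * L ^ ((1 - α)/4) > 2 ^ ((1:ℝ)/4) * Λ :=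
    lt_rpow_neg_quarter_mul_of_lt (by positivity) (by linarith) hcase
  refine ⟨hs, ?_⟩
  intro s μ
  have hq : 1 < s / Λ := by
    have : 1 ≤ (2:ℝ) ^ ((1:ℝ)/4) := one_le_rpow (by norm_num) (by norm_num)
    rw [one_lt_div (by linarith)]
    exact lt_of_le_of_lt (le_mul_of_one_le_left (by linarith) this) hs
  have hμ : π⁻¹ * (Λ ^ 2 / s ^ 2) ≤ μ := by
    rw [← inv_div, ← div_pow]
    exact mul_le_mul_of_nonneg_left (inv_sq_le_rpow_pow_four_sub_one hq) (by positivity)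
  have hs2 : s ^ 2 = Λ * L ^ ((1 - α)/2) / √(2 * (Δ + 2) * π) :=
    sq_rpow_neg_quarter_mul (by positivity) (by linarith) (by positivity) _
  have hLα : L ^ (-α) < 1 := rpow_lt_one_of_one_lt_of_neg hL (by linarith)
  constructor
  · rw [← sqrt_eq_rpow, ← mul_inv_div_sub_mul_eq_of_eq hk pi_pos (by linarith) (by linarith) hs2]
    have := mul_le_mul_of_nonneg_right hμ (by linarith : (0:ℝ) ≤ L)
    linarith
  · exact mul_pos (by positivity) (by linarith)

theorem stmt_18 (Λ α ε Δ : ℝ) (hΛ : 1 < Λ) (hα0 : 0 < α) (hα1 : α < 1)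
    (hε0 : 0 < ε) (hε1 : ε < Real.exp (-1)) (hΔ : 0 ≤ Δ)
    (hcase : |Real.log ε| ^ ((1 - α)/4) >
      (2 : ℝ) ^ ((1:ℝ)/4) * Λ ^ ((1:ℝ)/2) * (2 * (Δ + 2) * Real.pi) ^ ((1:ℝ)/4)) :
    (2 * (Δ + 2) * Real.pi) ^ (-(1:ℝ)/4) * Λ ^ ((1:ℝ)/2) * |Real.log ε| ^ ((1 - α)/4)
        > (2 : ℝ) ^ ((1:ℝ)/4) * Λ ∧
    (let s := (2 * (Δ + 2) * Real.pi) ^ (-(1:ℝ)/4) * Λ ^ ((1:ℝ)/2) *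
        |Real.log ε| ^ ((1 - α)/4);
      let μ := Real.pi⁻¹ * ((s / Λ) ^ (4:ℕ) - 1) ^ (-(1:ℝ)/2);
      2 * μ * |Real.log ε| - 2 * (Δ + 2) * s ^ 2 ≥
        2 * (2 * (Δ + 2) / Real.pi) ^ ((1:ℝ)/2) * Λ * |Real.log ε| ^ ((1 + α)/2) *
          (1 - (1/2) * |Real.log ε| ^ (-α)) ∧
      0 < 2 * (2 * (Δ + 2) / Real.pi) ^ ((1:ℝ)/2) * Λ * |Real.log ε| ^ ((1 + α)/2) *
          (1 - (1/2) * |Real.log ε| ^ (-α))) :=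
  stmt_18_general Λ α ε Δ hΛ hα0 hε0 hε1 hΔ hcase
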